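/- arXiv:1603.00082 — 4 statements merged into one kernel-verified Lean document; each statement's English description precedes it below -/
import Mathlib

section
/- Let (P, ≤) be a countably infinite partial order with the extension property. Then there exists a bijection g : P → P that reverses the order: for all x, y ∈ P, x ≤ y if and only if g(y) ≤ g(x). -/
/-- The set `A ∪ {⋆}` where `⋆` is modeled as `none` and elements of `A` as `some a`. -/
def starSet {P : Type*} (A : Finset P) : Set (Option P) :=
  insert none (Option.some '' (A : Set P))

/-- A partial order has the extension property if every partial order on `A ∪ {⋆}`
(for `A ⊆ P` finite, `⋆ ∉ A`) whose restriction to `A` coincides with `≤` is realized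
by some point `p ∈ P \ A`. -/
def ExtensionProperty (P : Type*) [PartialOrder P] : Prop :=
  ∀ (A : Finset P) (R : Option P → Option P → Prop),
    (∀ x ∈ starSet A, R x x) →
    (∀ x ∈ starSet A, ∀ y ∈ starSet A, R x y → R y x → x = y) →
    (∀ x ∈ starSet A, ∀ y ∈ starSet A, ∀ z ∈ starSet A, R x y → R y z → R x z) →
    (∀ a ∈ A, ∀ b ∈ A, (R (some a) (some b) ↔ a ≤ b)) →
    ∃ p : P, p ∉ A ∧ ∀ a ∈ A, (a ≤ p ↔ R (some a) none) ∧ (p ≤ a ↔ R none (some a))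

section Aux

variable {P : Type*} [PartialOrder P]

/-- A finite partial order-reversing isomorphism. -/
structure PIso (P : Type*) [PartialOrder P] where
  A : Finset P
  f : P → P
  anti : ∀ a ∈ A, ∀ b ∈ A, (a ≤ b ↔ f b ≤ f a)

lemma PIso.injOn (φ : PIso P) : Set.InjOn φ.f φ.A := by
  intro a ha b hb h
  exact le_antisymm ((φ.anti a ha b hb).2 h.ge) ((φ.anti b hb a ha).2 h.le)

lemma mem_starSet_some {A : Finset P} {x : P} :
    (some x) ∈ starSet A ↔ x ∈ A := by
  simp [starSet]

lemma none_mem_starSet {A : Finset P} : (none : Option P) ∈ starSet A := by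
  simp [starSet]

lemma extend_dom (hP : ExtensionProperty P) (φ : PIso P) (p : P) :
    ∃ ψ : PIso P, φ.A ⊆ ψ.A ∧ p ∈ ψ.A ∧ ∀ a ∈ φ.A, ψ.f a = φ.f a := by
  classical
  by_cases hp : p ∈ φ.A
  · exact ⟨φ, subset_rfl, hp, fun a _ => rfl⟩
  set A' := φ.A.image φ.f with hA'
  set R : Option P → Option P → Prop := fun o₁ o₂ =>
    match o₁, o₂ with
    | none, none => True
    | some x, some y => x ≤ y
    | some x, none => ∃ a ∈ φ.A, φ.f a = x ∧ p ≤ a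
    | none, some y => ∃ a ∈ φ.A, φ.f a = y ∧ a ≤ p
    with hR
  have hrefl : ∀ x ∈ starSet A', R x x := by
    rintro (_ | x) _
    · trivial
    · exact le_rfl
  have hanti : ∀ x ∈ starSet A', ∀ y ∈ starSet A', R x y → R y x → x = y := by
    rintro (_ | x) hx (_ | y) hy h1 h2
    · rfl
    · obtain ⟨a, ha, hfa, hap⟩ := h1
      obtain ⟨b, hb, hfb, hpb⟩ := h2
      have hab : a = b := φ.injOn ha hb (hfa.trans hfb.symm)
      subst hab
      have hpa : a = p := le_antisymm hap hpb
      exact absurd (hpa ▸ ha) hp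
    · obtain ⟨a, ha, hfa, hpa⟩ := h1
      obtain ⟨b, hb, hfb, hbp⟩ := h2
      have hab : a = b := φ.injOn ha hb (hfa.trans hfb.symm)
      subst hab
      have hpa' : a = p := le_antisymm hbp hpa
      exact absurd (hpa' ▸ ha) hp
    · exact congrArg some (le_antisymm h1 h2)
  have htrans : ∀ x ∈ starSet A', ∀ y ∈ starSet A', ∀ z ∈ starSet A',
      R x y → R y z → R x z := by
    rintro (_ | x) hx (_ | y) hy (_ | z) hz h1 h2
    · trivial
    · exact h2
    · trivial
    · -- none, some y, some z : R none (some z)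
      obtain ⟨a, ha, hfa, hap⟩ := h1
      obtain ⟨b, hb, hfz⟩ := by
        have := mem_starSet_some.1 hz
        exact Finset.mem_image.1 this
      exact ⟨b, hb, hfz, ((φ.anti b hb a ha).2 (by rw [hfa, hfz]; exact h2)).trans hap⟩
    · exact h1
    · -- some x, none, some z
      obtain ⟨a, ha, hfa, hpa⟩ := h1
      obtain ⟨b, hb, hfb, hbp⟩ := h2
      show x ≤ z
      rw [← hfa, ← hfb]
      exact (φ.anti b hb a ha).1 (hbp.trans hpa)
    · -- some x, some y, none
      obtain ⟨a, ha, hfa, hpa⟩ := h2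
      obtain ⟨b, hb, hfx⟩ := Finset.mem_image.1 (mem_starSet_some.1 hx)
      exact ⟨b, hb, hfx, hpa.trans ((φ.anti a ha b hb).2 (by rw [hfx, hfa]; exact h1))⟩
    · exact h1.trans h2
  have hrestrict : ∀ a ∈ A', ∀ b ∈ A', (R (some a) (some b) ↔ a ≤ b) :=
    fun a _ b _ => Iff.rfl
  obtain ⟨q, hq, hq2⟩ := hP A' R hrefl hanti htrans hrestrict
  refine ⟨⟨insert p φ.A, Function.update φ.f p q, ?_⟩, Finset.subset_insert _ _,
    Finset.mem_insert_self _ _, fun a ha => Function.update_of_ne (fun (h : a = p) => hp (h ▸ ha)) _ _⟩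
  intro a ha b hb
  rcases Finset.mem_insert.1 ha with ha' | ha
  · rcases Finset.mem_insert.1 hb with hb' | hb
    · rw [ha', hb']; simp
    · have hbp : b ≠ p := fun h => hp (h ▸ hb)
      rw [ha', Function.update_self, Function.update_of_ne hbp]
      rw [(hq2 (φ.f b) (Finset.mem_image_of_mem _ hb)).1]
      show p ≤ b ↔ ∃ c ∈ φ.A, φ.f c = φ.f b ∧ p ≤ c
      constructor
      · intro h
        exact ⟨b, hb, rfl, h⟩
      · rintro ⟨c, hc, hfc, hpc⟩
        exact (φ.injOn hc hb hfc) ▸ hpc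
  · rcases Finset.mem_insert.1 hb with hb' | hb
    · have hap : a ≠ p := fun h => hp (h ▸ ha)
      rw [hb', Function.update_self, Function.update_of_ne hap]
      rw [(hq2 (φ.f a) (Finset.mem_image_of_mem _ ha)).2]
      show a ≤ p ↔ ∃ c ∈ φ.A, φ.f c = φ.f a ∧ c ≤ p
      constructor
      · intro h
        exact ⟨a, ha, rfl, h⟩
      · rintro ⟨c, hc, hfc, hcp⟩
        exact (φ.injOn hc ha hfc) ▸ hcp
    · have hap : a ≠ p := fun h => hp (h ▸ ha)
      have hbp : b ≠ p := fun h => hp (h ▸ hb)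
      rw [Function.update_of_ne hap, Function.update_of_ne hbp]
      exact φ.anti a ha b hb

lemma extend_ran (hP : ExtensionProperty P) (φ : PIso P) (q : P) :
    ∃ ψ : PIso P, φ.A ⊆ ψ.A ∧ (∃ p ∈ ψ.A, ψ.f p = q) ∧ ∀ a ∈ φ.A, ψ.f a = φ.f a := by
  classical
  by_cases hq : q ∈ φ.A.image φ.f
  · obtain ⟨p, hp, hfp⟩ := Finset.mem_image.1 hq
    exact ⟨φ, subset_rfl, ⟨p, hp, hfp⟩, fun a _ => rfl⟩
  set R : Option P → Option P → Prop := fun o₁ o₂ =>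
    match o₁, o₂ with
    | none, none => True
    | some x, some y => x ≤ y
    | some x, none => q ≤ φ.f x
    | none, some y => φ.f y ≤ q
    with hR
  have hrefl : ∀ x ∈ starSet φ.A, R x x := by
    rintro (_ | x) _
    · trivial
    · exact le_rfl
  have hanti : ∀ x ∈ starSet φ.A, ∀ y ∈ starSet φ.A, R x y → R y x → x = y := by
    rintro (_ | x) hx (_ | y) hy h1 h2
    · rfl
    · exact absurd (le_antisymm h1 h2 ▸ Finset.mem_image_of_mem φ.f (mem_starSet_some.1 hy)) hq
    · exact absurd (le_antisymm h2 h1 ▸ Finset.mem_image_of_mem φ.f (mem_starSet_some.1 hx)) hq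
    · exact congrArg some (le_antisymm h1 h2)
  have htrans : ∀ x ∈ starSet φ.A, ∀ y ∈ starSet φ.A, ∀ z ∈ starSet φ.A,
      R x y → R y z → R x z := by
    rintro (_ | x) hx (_ | y) hy (_ | z) hz h1 h2
    · trivial
    · exact h2
    · trivial
    · -- none, some y, some z : goal φ.f z ≤ q
      exact le_trans ((φ.anti y (mem_starSet_some.1 hy) z (mem_starSet_some.1 hz)).1 h2) h1
    · exact h1
    · -- some x, none, some z : goal x ≤ z
      exact (φ.anti x (mem_starSet_some.1 hx) z (mem_starSet_some.1 hz)).2 (h2.trans h1)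
    · -- some x, some y, none : goal q ≤ φ.f x
      exact h2.trans ((φ.anti x (mem_starSet_some.1 hx) y (mem_starSet_some.1 hy)).1 h1)
    · exact h1.trans h2
  obtain ⟨p, hp, hp2⟩ := hP φ.A R hrefl hanti htrans (fun a _ b _ => Iff.rfl)
  refine ⟨⟨insert p φ.A, Function.update φ.f p q, ?_⟩, Finset.subset_insert _ _,
    ⟨p, Finset.mem_insert_self _ _, Function.update_self p q φ.f⟩,
    fun a ha => Function.update_of_ne (fun (h : a = p) => hp (h ▸ ha)) _ _⟩
  intro a ha b hb
  rcases Finset.mem_insert.1 ha with ha' | ha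
  · rcases Finset.mem_insert.1 hb with hb' | hb
    · rw [ha', hb']; simp
    · have hbp : b ≠ p := fun h => hp (h ▸ hb)
      rw [ha', Function.update_self, Function.update_of_ne hbp]
      exact (hp2 b hb).2
  · rcases Finset.mem_insert.1 hb with hb' | hb
    · have hap : a ≠ p := fun h => hp (h ▸ ha)
      rw [hb', Function.update_self, Function.update_of_ne hap]
      exact (hp2 a ha).1
    · have hap : a ≠ p := fun h => hp (h ▸ ha)
      have hbp : b ≠ p := fun h => hp (h ▸ hb)
      rw [Function.update_of_ne hap, Function.update_of_ne hbp]
      exact φ.anti a ha b hb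

lemma step (hP : ExtensionProperty P) (φ : PIso P) (x : P) :
    ∃ ψ : PIso P, φ.A ⊆ ψ.A ∧ x ∈ ψ.A ∧ (∃ p ∈ ψ.A, ψ.f p = x) ∧
      ∀ a ∈ φ.A, ψ.f a = φ.f a := by
  obtain ⟨ψ₁, h1, h2, h3⟩ := extend_dom hP φ x
  obtain ⟨ψ₂, k1, k2, k3⟩ := extend_ran hP ψ₁ x
  exact ⟨ψ₂, h1.trans k1, k1 h2, k2, fun a ha => (k3 a (h1 ha)).trans (h3 a ha)⟩

noncomputable def chain (hP : ExtensionProperty P) (e : ℕ → P) : ℕ → PIso P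
  | 0 => ⟨∅, id, fun a ha => absurd ha (Finset.notMem_empty a)⟩
  | n + 1 => (step hP (chain hP e n) (e n)).choose

lemma chain_spec (hP : ExtensionProperty P) (e : ℕ → P) (n : ℕ) :
    (chain hP e n).A ⊆ (chain hP e (n + 1)).A ∧ e n ∈ (chain hP e (n + 1)).A ∧
      (∃ p ∈ (chain hP e (n + 1)).A, (chain hP e (n + 1)).f p = e n) ∧
      ∀ a ∈ (chain hP e n).A, (chain hP e (n + 1)).f a = (chain hP e n).f a :=
  (step hP (chain hP e n) (e n)).choose_spec

lemma chain_mono (hP : ExtensionProperty P) (e : ℕ → P) {m n : ℕ} (h : m ≤ n) :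
    (chain hP e m).A ⊆ (chain hP e n).A := by
  induction n, h using Nat.le_induction with
  | base => exact subset_rfl
  | succ n hmn ih => exact ih.trans (chain_spec hP e n).1

lemma chain_agree (hP : ExtensionProperty P) (e : ℕ → P) {m n : ℕ} (h : m ≤ n) :
    ∀ a ∈ (chain hP e m).A, (chain hP e n).f a = (chain hP e m).f a := by
  induction n, h using Nat.le_induction with
  | base => exact fun a _ => rfl
  | succ n hmn ih =>
    intro a ha
    exact ((chain_spec hP e n).2.2.2 a (chain_mono hP e hmn ha)).trans (ih a ha)

end Aux

/-- The random partial order admits an order-reversing bijection. -/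
theorem random_partial_order_reversing_bijection
    (P : Type*) [PartialOrder P] [Countable P] [Infinite P]
    (hP : ExtensionProperty P) :
    ∃ g : P → P, Function.Bijective g ∧ ∀ x y : P, x ≤ y ↔ g y ≤ g x := by
  obtain ⟨e, he⟩ := exists_surjective_nat P
  set F := chain hP e with hF
  set N : P → ℕ := fun x => (he x).choose + 1 with hN
  have hmem : ∀ x : P, x ∈ (F (N x)).A := by
    intro x
    have h1 : e (he x).choose = x := (he x).choose_spec
    have := (chain_spec hP e (he x).choose).2.1
    rwa [h1] at this
  set g : P → P := fun x => (F (N x)).f x with hg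
  have g_eq : ∀ (x : P) (n : ℕ), x ∈ (F n).A → g x = (F n).f x := by
    intro x n hx
    have h1 : g x = (F (max n (N x))).f x :=
      (chain_agree hP e (le_max_right n (N x)) x (hmem x)).symm
    have h2 : (F (max n (N x))).f x = (F n).f x :=
      chain_agree hP e (le_max_left n (N x)) x hx
    exact h1.trans h2
  have hrev : ∀ x y : P, x ≤ y ↔ g y ≤ g x := by
    intro x y
    set n := max (N x) (N y)
    have hx : x ∈ (F n).A := chain_mono hP e (le_max_left _ _) (hmem x)
    have hy : y ∈ (F n).A := chain_mono hP e (le_max_right _ _) (hmem y)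
    rw [g_eq x n hx, g_eq y n hy]
    exact (F n).anti x hx y hy
  refine ⟨g, ⟨?_, ?_⟩, hrev⟩
  · intro x y h
    exact le_antisymm ((hrev x y).2 h.ge) ((hrev y x).2 h.le)
  · intro y
    obtain ⟨p, hp, hfp⟩ := (chain_spec hP e (he y).choose).2.2.1
    refine ⟨p, ?_⟩
    rw [g_eq p _ hp, hfp, (he y).choose_spec]
end

section
/- Let (P, ≤) be a partial order with the extension property and let u, v ∈ P with u < v. Then for all x, y ∈ P: x < y if and only if there exist a, b ∈ P with Betw(x,y,a) ∧ Betw(y,a,b) ∧ Betw(u,v,a) ∧ Betw(v,a,b). -/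
def Betw {P : Type*} [PartialOrder P] (x y z : P) : Prop :=
  (x < y ∧ y < z) ∨ (z < y ∧ y < x)

lemma exists_above {P : Type*} [PartialOrder P] (hP : ExtensionProperty P)
    (A : Finset P) : ∃ p, ∀ a ∈ A, a < p := by
  obtain ⟨p, hpA, hp⟩ := hP A (fun o₁ o₂ => match o₁, o₂ with
      | some a, some b => a ≤ b
      | _, none => True
      | none, some _ => False)
    (by rintro (_|x) _ <;> simp)
    (by rintro (_|x) _ (_|y) _ h1 h2 <;> simp_all; exact le_antisymm h1 h2)
    (by rintro (_|x) _ (_|y) _ (_|z) _ h1 h2 <;> simp_all; exact le_trans h1 h2)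
    (by intro a _ b _; simp)
  exact ⟨p, fun a ha => lt_of_le_of_ne ((hp a ha).1.mpr trivial) (fun h => hpA (h ▸ ha))⟩

theorem lt_definable_from_betw
    (P : Type*) [PartialOrder P] (hP : ExtensionProperty P)
    (u v : P) (huv : u < v) :
    ∀ x y : P, x < y ↔
      ∃ a b : P, Betw x y a ∧ Betw y a b ∧ Betw u v a ∧ Betw v a b := by
  classical
  intro x y
  constructor
  · intro hxy
    obtain ⟨a, ha⟩ := exists_above hP {y, v}
    have hya : y < a := ha y (by simp)
    have hva : v < a := ha v (by simp)
    obtain ⟨b, hb⟩ := exists_above hP {a}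
    have hab : a < b := hb a (by simp)
    exact ⟨a, b, Or.inl ⟨hxy, hya⟩, Or.inl ⟨hya, hab⟩, Or.inl ⟨huv, hva⟩, Or.inl ⟨hva, hab⟩⟩
  · rintro ⟨a, b, h1, h2, h3, h4⟩
    have hva : v < a := by
      rcases h3 with ⟨_, h⟩ | ⟨_, h⟩
      · exact h
      · exact absurd (huv.trans h) (lt_irrefl u)
    have hab : a < b := by
      rcases h4 with ⟨_, h⟩ | ⟨_, h⟩
      · exact h
      · exact absurd (hva.trans h) (lt_irrefl v)
    have hya : y < a := by
      rcases h2 with ⟨h, _⟩ | ⟨h, _⟩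
      · exact h
      · exact absurd (hab.trans h) (lt_irrefl a)
    rcases h1 with ⟨h, _⟩ | ⟨h, _⟩
    · exact h
    · exact absurd (hya.trans h) (lt_irrefl y)
end

section
/- Let (P, ≤) be a partial order with the extension property, and let f : P → P be a map such that for all x, y, z, t ∈ P, Sep(x,y,z,t) implies Sep(f x, f y, f z, f t). Then either for all x, y, z ∈ P, Cycl(x,y,z) implies Cycl(f x, f y, f z), or for all x, y, z ∈ P, Cycl(x,y,z) implies Cycl(f z, f y, f x). -/
/-- `x ⊥ y` : incomparability. -/
def Incomp {P : Type*} [PartialOrder P] (x y : P) : Prop := ¬ x ≤ y ∧ ¬ y ≤ x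
def Cycl {P : Type*} [PartialOrder P] (x y z : P) : Prop :=
  (x < y ∧ y < z) ∨ (y < z ∧ z < x) ∨ (z < x ∧ x < y) ∨
  (x < y ∧ Incomp z x ∧ Incomp z y) ∨ (y < z ∧ Incomp x y ∧ Incomp x z) ∨
  (z < x ∧ Incomp y z ∧ Incomp y x)
def SepRel {P : Type*} [PartialOrder P] (x y z t : P) : Prop :=
  (Cycl x y z ∧ Cycl y z t ∧ Cycl x y t ∧ Cycl x z t) ∨
  (Cycl z y x ∧ Cycl t z y ∧ Cycl t y x ∧ Cycl t z x)

section Aux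

variable {P : Type*} [PartialOrder P]

theorem cycl_rot {x y z : P} (h : Cycl x y z) : Cycl y z x := by
  unfold Cycl at *; tauto

theorem cycl_asym {x y z : P} (h1 : Cycl x y z) (h2 : Cycl z y x) : False := by
  unfold Cycl Incomp at h1 h2
  rcases h1 with h|h|h|h|h|h <;> rcases h2 with g|g|g|g|g|g <;>
    simp only [lt_iff_le_not_ge] at h g <;> tauto

theorem mem_starSet {A : Finset P} {o : Option P} :
    o ∈ starSet A ↔ o = none ∨ ∃ a ∈ A, o = some a := by
  simp [starSet, eq_comm]

theorem ext_above (hP : ExtensionProperty P) (A : Finset P) :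
    ∃ p, p ∉ A ∧ ∀ a ∈ A, a < p := by
  set R : Option P → Option P → Prop := fun o1 o2 => match o1, o2 with
      | some a, some b => a ≤ b
      | some _, none => True
      | none, some _ => False
      | none, none => True with hRdef
  have h1 : ∀ x ∈ starSet A, R x x := by
    rintro (_|a) _ <;> first | trivial | exact le_refl _
  have h2 : ∀ x ∈ starSet A, ∀ y ∈ starSet A, R x y → R y x → x = y := by
    rintro (_|a) hx (_|b) hy hxy hyx <;>
      first | rfl | exact hxy.elim | exact hyx.elim |
        exact congrArg some (le_antisymm hxy hyx)
  have h3 : ∀ x ∈ starSet A, ∀ y ∈ starSet A, ∀ z ∈ starSet A, R x y → R y z → R x z := by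
    rintro (_|a) hx (_|b) hy (_|c) hz hxy hyz <;>
      first | trivial | exact hxy.elim | exact hyz.elim | exact le_trans hxy hyz
  have h4 : ∀ a ∈ A, ∀ b ∈ A, (R (some a) (some b) ↔ a ≤ b) := fun a _ b _ => Iff.rfl
  obtain ⟨p, hp, hfa⟩ := hP A R h1 h2 h3 h4
  exact ⟨p, hp, fun a ha =>
    lt_of_le_of_ne ((hfa a ha).1.mpr trivial) (fun h => hp (h ▸ ha))⟩

theorem ext_edge (hP : ExtensionProperty P) {x y z : P}
    (hxy : x < y) (hzx : Incomp z x) (hzy : Incomp z y) :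
    ∃ p, p < x ∧ p ≤ y ∧ Incomp z p := by
  classical
  set R : Option P → Option P → Prop := fun o1 o2 => match o1, o2 with
      | some a, some b => a ≤ b
      | some _, none => False
      | none, some b => x ≤ b ∨ y ≤ b
      | none, none => True with hRdef
  have h1 : ∀ o ∈ starSet ({x, y, z} : Finset P), R o o := by
    rintro (_|a) _ <;> first | trivial | exact le_refl _
  have h2 : ∀ o ∈ starSet ({x, y, z} : Finset P), ∀ o' ∈ starSet ({x, y, z} : Finset P),
      R o o' → R o' o → o = o' := by
    rintro (_|a) hx' (_|b) hy' hxy' hyx' <;>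
      first | rfl | exact hxy'.elim | exact hyx'.elim |
        exact congrArg some (le_antisymm hxy' hyx')
  have h3 : ∀ o ∈ starSet ({x, y, z} : Finset P), ∀ o' ∈ starSet ({x, y, z} : Finset P),
      ∀ o'' ∈ starSet ({x, y, z} : Finset P), R o o' → R o' o'' → R o o'' := by
    rintro (_|a) hx' (_|b) hy' (_|c) hz' hxy' hyz' <;>
      first
      | trivial
      | exact hxy'.elim
      | exact hyz'.elim
      | exact hxy'.imp (fun h => le_trans h hyz') (fun h => le_trans h hyz')
      | exact le_trans hxy' hyz'
  have h4 : ∀ a ∈ ({x, y, z} : Finset P), ∀ b ∈ ({x, y, z} : Finset P),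
      (R (some a) (some b) ↔ a ≤ b) := fun a _ b _ => Iff.rfl
  obtain ⟨p, hp, hfa⟩ := hP {x, y, z} R h1 h2 h3 h4
  have hx := hfa x (by simp)
  have hy := hfa y (by simp)
  have hz := hfa z (by simp)
  have hpx : p ≤ x := hx.2.mpr (Or.inl le_rfl)
  have hpne : p ≠ x := fun h => hp (by simp [h])
  refine ⟨p, lt_of_le_of_ne hpx hpne, hy.2.mpr (Or.inr le_rfl), ?_, ?_⟩
  · intro h; exact hz.1.mp h
  · intro h; rcases hz.2.mp h with h' | h'
    · exact hzx.2 h'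
    · exact hzy.2 h'

theorem sep_chain {a b c d : P} (h1 : a < b) (h2 : b < c) (h3 : c < d) :
    SepRel a b c d :=
  Or.inl ⟨Or.inl ⟨h1, h2⟩, Or.inl ⟨h2, h3⟩, Or.inl ⟨h1, h2.trans h3⟩,
    Or.inl ⟨h1.trans h2, h3⟩⟩

theorem sep_edge {x y z p : P} (hxy : x < y) (hzx : Incomp z x) (hzy : Incomp z y)
    (hpx : p < x) (hzp : Incomp z p) : SepRel x y z p :=
  Or.inl ⟨
    Or.inr (Or.inr (Or.inr (Or.inl ⟨hxy, hzx, hzy⟩))),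
    Or.inr (Or.inr (Or.inr (Or.inr (Or.inr ⟨hpx.trans hxy, hzp, hzy⟩)))),
    Or.inr (Or.inr (Or.inl ⟨hpx, hxy⟩)),
    Or.inr (Or.inr (Or.inr (Or.inr (Or.inr ⟨hpx, hzp, hzx⟩))))⟩

theorem sep_c1 {a b c d : P} (h : SepRel a b c d) (h1 : Cycl a b c) :
    Cycl b c d ∧ Cycl a b d ∧ Cycl a c d := by
  rcases h with ⟨_, h2, h3, h4⟩ | ⟨g1, _, _, _⟩
  · exact ⟨h2, h3, h4⟩
  · exact (cycl_asym h1 g1).elim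

theorem sep_c2 {a b c d : P} (h : SepRel a b c d) (h2 : Cycl b c d) :
    Cycl a b c ∧ Cycl a b d ∧ Cycl a c d := by
  rcases h with ⟨g1, _, g3, g4⟩ | ⟨_, g2, _, _⟩
  · exact ⟨g1, g3, g4⟩
  · exact (cycl_asym h2 g2).elim

theorem sep_c3 {a b c d : P} (h : SepRel a b c d) (h3 : Cycl a b d) :
    Cycl a b c ∧ Cycl b c d ∧ Cycl a c d := by
  rcases h with ⟨g1, g2, _, g4⟩ | ⟨_, _, g3, _⟩
  · exact ⟨g1, g2, g4⟩
  · exact (cycl_asym h3 g3).elim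

def Ccan (x y z : P) : Prop :=
  (x < y ∧ y < z) ∨ (x < y ∧ Incomp z x ∧ Incomp z y)

theorem canon {x y z : P} (h : Cycl x y z) : Ccan x y z ∨ Ccan y z x ∨ Ccan z x y := by
  unfold Cycl at h; unfold Ccan; tauto

theorem chain_key (hP : ExtensionProperty P) {f : P → P}
    (hsep : ∀ x y z t : P, SepRel x y z t → SepRel (f x) (f y) (f z) (f t))
    {a b c a' b' c' : P} (h1 : a < b) (h2 : b < c) (h1' : a' < b') (h2' : b' < c')
    (hf : Cycl (f a) (f b) (f c)) : Cycl (f a') (f b') (f c') := by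
  classical
  obtain ⟨d, hd, hda⟩ := ext_above hP {a, b, c, a', b', c'}
  have hcd : c < d := hda c (by simp)
  have hc'd : c' < d := hda c' (by simp)
  obtain ⟨e, he, hea⟩ := ext_above hP {d}
  have hde : d < e := hea d (by simp)
  obtain ⟨g, hg, hga⟩ := ext_above hP {e}
  have heg : e < g := hga e (by simp)
  have s1 := (sep_c1 (hsep _ _ _ _ (sep_chain h1 h2 hcd)) hf).1
  have s2 := (sep_c1 (hsep _ _ _ _ (sep_chain h2 hcd hde)) s1).1
  have s3 := (sep_c1 (hsep _ _ _ _ (sep_chain hcd hde heg)) s2).1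
  have s4 := (sep_c2 (hsep _ _ _ _ (sep_chain hc'd hde heg)) s3).1
  have s5 := (sep_c2 (hsep _ _ _ _ (sep_chain h2' hc'd hde)) s4).1
  exact (sep_c2 (hsep _ _ _ _ (sep_chain h1' h2' hc'd)) s5).1

theorem keyC (hP : ExtensionProperty P) {f : P → P}
    (hsep : ∀ x y z t : P, SepRel x y z t → SepRel (f x) (f y) (f z) (f t))
    {x y z u v w : P} (hs : Ccan x y z) (ht : Ccan u v w)
    (hf : Cycl (f x) (f y) (f z)) : Cycl (f u) (f v) (f w) := by
  obtain ⟨a, b, c, hab, hbc, hfc⟩ :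
      ∃ a b c : P, a < b ∧ b < c ∧ Cycl (f a) (f b) (f c) := by
    rcases hs with ⟨h1, h2⟩ | ⟨h1, h2, h3⟩
    · exact ⟨x, y, z, h1, h2, hf⟩
    · obtain ⟨p, hpx, _, hzp⟩ := ext_edge hP h1 h2 h3
      have hsp := hsep x y z p (sep_edge h1 h2 h3 hpx hzp)
      exact ⟨p, x, y, hpx, h1, cycl_rot (cycl_rot (sep_c1 hsp hf).2.1)⟩
  rcases ht with ⟨h1, h2⟩ | ⟨h1, h2, h3⟩
  · exact chain_key hP hsep hab hbc h1 h2 hfc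
  · obtain ⟨q, hqu, _, hwq⟩ := ext_edge hP h1 h2 h3
    have hch := chain_key hP hsep hab hbc hqu h1 hfc
    have hsp := hsep u v w q (sep_edge h1 h2 h3 hqu hwq)
    exact (sep_c3 hsp (cycl_rot hch)).1

theorem key (hP : ExtensionProperty P) {f : P → P}
    (hsep : ∀ x y z t : P, SepRel x y z t → SepRel (f x) (f y) (f z) (f t))
    {x y z u v w : P} (hc : Cycl x y z) (hc' : Cycl u v w)
    (hf : Cycl (f x) (f y) (f z)) : Cycl (f u) (f v) (f w) := by
  obtain ⟨a, b, c, hC, hfC⟩ : ∃ a b c, Ccan a b c ∧ Cycl (f a) (f b) (f c) := by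
    rcases canon hc with h | h | h
    · exact ⟨x, y, z, h, hf⟩
    · exact ⟨y, z, x, h, cycl_rot hf⟩
    · exact ⟨z, x, y, h, cycl_rot (cycl_rot hf)⟩
  rcases canon hc' with h | h | h
  · exact keyC hP hsep hC h hfC
  · exact cycl_rot (cycl_rot (keyC hP hsep hC h hfC))
  · exact cycl_rot (keyC hP hsep hC h hfC)

theorem step1C (hP : ExtensionProperty P) {f : P → P}
    (hsep : ∀ x y z t : P, SepRel x y z t → SepRel (f x) (f y) (f z) (f t))
    {a b c : P} (h : Ccan a b c) :
    Cycl (f a) (f b) (f c) ∨ Cycl (f c) (f b) (f a) := by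
  classical
  rcases h with ⟨h1, h2⟩ | ⟨h1, h2, h3⟩
  · obtain ⟨d, hd, hda⟩ := ext_above hP {a, b, c}
    have hcd : c < d := hda c (by simp)
    rcases hsep a b c d (sep_chain h1 h2 hcd) with ⟨g, _, _, _⟩ | ⟨g, _, _, _⟩
    · exact Or.inl g
    · exact Or.inr g
  · obtain ⟨p, hpa, _, hcp⟩ := ext_edge hP h1 h2 h3
    rcases hsep a b c p (sep_edge h1 h2 h3 hpa hcp) with ⟨g, _, _, _⟩ | ⟨g, _, _, _⟩
    · exact Or.inl g
    · exact Or.inr g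

theorem step1 (hP : ExtensionProperty P) {f : P → P}
    (hsep : ∀ x y z t : P, SepRel x y z t → SepRel (f x) (f y) (f z) (f t))
    {x y z : P} (hc : Cycl x y z) :
    Cycl (f x) (f y) (f z) ∨ Cycl (f z) (f y) (f x) := by
  rcases canon hc with h | h | h
  · exact step1C hP hsep h
  · rcases step1C hP hsep h with g | g
    · exact Or.inl (cycl_rot (cycl_rot g))
    · exact Or.inr (cycl_rot g)
  · rcases step1C hP hsep h with g | g
    · exact Or.inl (cycl_rot g)
    · exact Or.inr (cycl_rot (cycl_rot g))

end Aux

/-- In a partial order with the extension property, a self-map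
preserving `Sep` preserves `Cycl` or reverses `Cycl`. -/
theorem sep_preserving_preserves_or_reverses_cycl
    (P : Type*) [PartialOrder P] (hP : ExtensionProperty P)
    (f : P → P)
    (hsep : ∀ x y z t : P, SepRel x y z t → SepRel (f x) (f y) (f z) (f t)) :
    (∀ x y z : P, Cycl x y z → Cycl (f x) (f y) (f z)) ∨
    (∀ x y z : P, Cycl x y z → Cycl (f z) (f y) (f x)) := by
  by_cases h : ∀ x y z : P, Cycl x y z → Cycl (f x) (f y) (f z)
  · exact Or.inl h
  · right
    push_neg at h
    obtain ⟨x0, y0, z0, hc0, hn0⟩ := h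
    intro x y z hc
    rcases step1 hP hsep hc with hf | hr
    · exact absurd (key hP hsep hc hc0 hf) hn0
    · exact hr
end

section
/- Let (P, ≤) be a partial order with the extension property, and let f : P × P → P be a map such that for all x, x', y, y' ∈ P: (x < x' ∧ y < y') implies f(x,y) < f(x',y'), and (x ⊥ x' ∧ y ⊥ y') implies f(x,y) ⊥ f(x',y'). Then f preserves the relation Low — i.e., whenever Low(x,y,z) and Low(x',y',z') hold, Low(f(x,x'), f(y,y'), f(z,z')) holds — if and only if f is dominated. -/
def Low {P : Type*} [PartialOrder P] (x y z : P) : Prop :=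
  (x < y ∧ Incomp z x ∧ Incomp z y) ∨ (x < z ∧ Incomp y x ∧ Incomp y z)
/-- `f` is dominated in the first argument. -/
def DominatedFst {P : Type*} [PartialOrder P] (f : P × P → P) : Prop :=
  (∀ x x' y y' : P, x < x' → f (x, y) < f (x', y')) ∧
  (∀ x x' y y' : P, Incomp x x' → Incomp (f (x, y)) (f (x', y')))

/-- `f` is dominated in the second argument. -/
def DominatedSnd {P : Type*} [PartialOrder P] (f : P × P → P) : Prop :=
  (∀ x x' y y' : P, y < y' → f (x, y) < f (x', y')) ∧
  (∀ x x' y y' : P, Incomp y y' → Incomp (f (x, y)) (f (x', y')))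

/-- `f` is dominated if it is dominated in the first or second argument. -/
def Dominated {P : Type*} [PartialOrder P] (f : P × P → P) : Prop :=
  DominatedFst f ∨ DominatedSnd f

section AuxLemmas

variable {P : Type*} [PartialOrder P]

lemma incomp_symm {x y : P} (h : Incomp x y) : Incomp y x := ⟨h.2, h.1⟩

/-- The relation used to realize a point above everything in `U`, below everything
in `D`, and (implicitly) incomparable to everything else. -/
def extRel (U D : Finset P) : Option P → Option P → Prop
  | some a, some b => a ≤ b
  | some a, none => ∃ u ∈ U, a ≤ u
  | none, some b => ∃ d ∈ D, d ≤ b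
  | none, none => True

lemma ext_gen (hP : ExtensionProperty P) (U D I : Finset P)
    (hUI : ∀ u ∈ U, ∀ i ∈ I, ¬ i ≤ u)
    (hDI : ∀ d ∈ D, ∀ i ∈ I, ¬ d ≤ i)
    (hUD : ∀ u ∈ U, ∀ d ∈ D, u < d) :
    ∃ p, (∀ u ∈ U, u < p) ∧ (∀ d ∈ D, p < d) ∧ ∀ i ∈ I, Incomp i p := by
  classical
  have hrefl : ∀ x ∈ starSet (U ∪ D ∪ I), extRel U D x x := by
    rintro (_ | a) _
    · trivial
    · exact le_refl a
  have hanti : ∀ x ∈ starSet (U ∪ D ∪ I), ∀ y ∈ starSet (U ∪ D ∪ I),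
      extRel U D x y → extRel U D y x → x = y := by
    rintro (_ | a) _ (_ | b) _ h1 h2
    · rfl
    · have h1' : ∃ d ∈ D, d ≤ b := h1
      have h2' : ∃ u ∈ U, b ≤ u := h2
      obtain ⟨d, hd, hdb⟩ := h1'
      obtain ⟨u, hu, hbu⟩ := h2'
      exact absurd (le_trans hdb hbu) (fun h => lt_irrefl _ (lt_of_lt_of_le (hUD u hu d hd) h))
    · have h1' : ∃ u ∈ U, a ≤ u := h1
      have h2' : ∃ d ∈ D, d ≤ a := h2
      obtain ⟨u, hu, hau⟩ := h1'
      obtain ⟨d, hd, hda⟩ := h2'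
      exact absurd (le_trans hda hau) (fun h => lt_irrefl _ (lt_of_lt_of_le (hUD u hu d hd) h))
    · exact congrArg some (le_antisymm h1 h2)
  have htrans : ∀ x ∈ starSet (U ∪ D ∪ I), ∀ y ∈ starSet (U ∪ D ∪ I),
      ∀ z ∈ starSet (U ∪ D ∪ I), extRel U D x y → extRel U D y z → extRel U D x z := by
    rintro (_ | a) _ (_ | b) _ (_ | c) _ h1 h2
    · trivial
    · exact h2
    · trivial
    · have h1' : ∃ d ∈ D, d ≤ b := h1
      have h2' : b ≤ c := h2
      obtain ⟨d, hd, hdb⟩ := h1'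
      exact show ∃ d ∈ D, d ≤ c from ⟨d, hd, le_trans hdb h2'⟩
    · exact h1
    · have h1' : ∃ u ∈ U, a ≤ u := h1
      have h2' : ∃ d ∈ D, d ≤ c := h2
      obtain ⟨u, hu, hau⟩ := h1'
      obtain ⟨d, hd, hdc⟩ := h2'
      exact show a ≤ c from le_trans (le_trans hau (hUD u hu d hd).le) hdc
    · have h1' : a ≤ b := h1
      have h2' : ∃ u ∈ U, b ≤ u := h2
      obtain ⟨u, hu, hbu⟩ := h2'
      exact show ∃ u ∈ U, a ≤ u from ⟨u, hu, le_trans h1' hbu⟩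
    · exact show a ≤ c from le_trans (h1 : a ≤ b) h2
  have hrestr : ∀ a ∈ (U ∪ D ∪ I), ∀ b ∈ (U ∪ D ∪ I),
      (extRel U D (some a) (some b) ↔ a ≤ b) := fun a _ b _ => Iff.rfl
  obtain ⟨p, hpA, hspec⟩ := hP (U ∪ D ∪ I) (extRel U D) hrefl hanti htrans hrestr
  refine ⟨p, ?_, ?_, ?_⟩
  · intro u hu
    have huA : u ∈ U ∪ D ∪ I := Finset.mem_union_left _ (Finset.mem_union_left _ hu)
    have hup : u ≤ p := (hspec u huA).1.mpr ⟨u, hu, le_rfl⟩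
    exact lt_of_le_of_ne hup fun he => hpA (by rw [← he]; exact huA)
  · intro d hd
    have hdA : d ∈ U ∪ D ∪ I := Finset.mem_union_left _ (Finset.mem_union_right _ hd)
    have hpd : p ≤ d := (hspec d hdA).2.mpr ⟨d, hd, le_rfl⟩
    exact lt_of_le_of_ne hpd fun he => hpA (by rw [he]; exact hdA)
  · intro i hi
    have hiA : i ∈ U ∪ D ∪ I := Finset.mem_union_right _ hi
    constructor
    · intro hle
      have h' : ∃ u ∈ U, i ≤ u := (hspec i hiA).1.mp hle
      obtain ⟨u, hu, hiu⟩ := h'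
      exact hUI u hu i hi hiu
    · intro hle
      have h' : ∃ d ∈ D, d ≤ i := (hspec i hiA).2.mp hle
      obtain ⟨d, hd, hdi⟩ := h'
      exact hDI d hd i hi hdi

lemma exists_incomp3 (hP : ExtensionProperty P) (a b c : P) :
    ∃ z, Incomp a z ∧ Incomp b z ∧ Incomp c z := by
  classical
  obtain ⟨z, -, -, hI⟩ := ext_gen hP ∅ ∅ {a, b, c} (by simp) (by simp) (by simp)
  exact ⟨z, hI a (by simp), hI b (by simp), hI c (by simp)⟩

lemma exists_gt_gt (hP : ExtensionProperty P) (a b : P) : ∃ m, a < m ∧ b < m := by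
  classical
  obtain ⟨m, hU, -, -⟩ := ext_gen hP {a, b} ∅ ∅ (by simp) (by simp) (by simp)
  exact ⟨m, hU a (by simp), hU b (by simp)⟩

lemma exists_gt_incomp2 (hP : ExtensionProperty P) (a b c : P)
    (hb : ¬ b ≤ a) (hc : ¬ c ≤ a) :
    ∃ w, a < w ∧ Incomp b w ∧ Incomp c w := by
  classical
  have hUI : ∀ u ∈ ({a} : Finset P), ∀ i ∈ ({b, c} : Finset P), ¬ i ≤ u := by
    intro u hu i hi
    simp only [Finset.mem_singleton] at hu
    simp only [Finset.mem_insert, Finset.mem_singleton] at hi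
    subst hu
    rcases hi with rfl | rfl
    · exact hb
    · exact hc
  obtain ⟨w, hU, -, hI⟩ := ext_gen hP {a} ∅ {b, c} hUI (by simp) (by simp)
  exact ⟨w, hU a (by simp), hI b (by simp), hI c (by simp)⟩

lemma exists_btw (hP : ExtensionProperty P) {a b : P} (h : a < b) :
    ∃ c, a < c ∧ c < b := by
  classical
  have hUD : ∀ u ∈ ({a} : Finset P), ∀ d ∈ ({b} : Finset P), u < d := by
    intro u hu d hd
    simp only [Finset.mem_singleton] at hu hd
    subst hu; subst hd; exact h
  obtain ⟨c, hU, hD, -⟩ := ext_gen hP {a} {b} ∅ (by simp) (by simp) hUD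
  exact ⟨c, hU a (by simp), hD b (by simp)⟩

/-- `f` preserves the `Low` relation. -/
def PresLow (f : P × P → P) : Prop :=
  ∀ x y z x' y' z' : P, Low x y z → Low x' y' z' →
    Low (f (x, x')) (f (y, y')) (f (z, z'))

/-- Base `(p,q)` is "second-argument-like": some pair of type `(<,⊥)` maps to `⊥`. -/
def SBad (f : P × P → P) (p q : P) : Prop :=
  ∃ m n, p < m ∧ Incomp q n ∧ Incomp (f (p, q)) (f (m, n))

lemma probe {f : P × P → P} (hpres : PresLow f) {p m z q n w : P}
    (h1 : p < m) (h2 : Incomp z p) (h3 : Incomp z m)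
    (h4 : q < w) (h5 : Incomp n q) (h6 : Incomp n w) :
    Low (f (p, q)) (f (m, n)) (f (z, w)) :=
  hpres p m z q n w (Or.inl ⟨h1, h2, h3⟩) (Or.inr ⟨h4, h5, h6⟩)

lemma dichot {f : P × P → P} (hP : ExtensionProperty P) (hpres : PresLow f)
    {p q m n : P} (hpm : p < m) (hqn : Incomp q n) :
    f (p, q) < f (m, n) ∨ Incomp (f (p, q)) (f (m, n)) := by
  obtain ⟨z, hpz, hmz, -⟩ := exists_incomp3 hP p m m
  obtain ⟨w, hqw, hnw, -⟩ := exists_gt_incomp2 hP q n n hqn.2 hqn.2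
  rcases probe hpres hpm (incomp_symm hpz) (incomp_symm hmz) hqw (incomp_symm hqn) hnw with
    ⟨h, -, -⟩ | ⟨-, h, -⟩
  · exact Or.inl h
  · exact Or.inr (incomp_symm h)

lemma sbad_lt_aux {f : P × P → P} (hpres : PresLow f) {p q m n : P}
    (hpm : p < m) (hqn : Incomp q n) (hf : Incomp (f (p, q)) (f (m, n)))
    {z w : P} (hzp : Incomp z p) (hzm : Incomp z m) (hqw : q < w) (hnw : Incomp n w) :
    f (p, q) < f (z, w) := by
  rcases probe hpres hpm hzp hzm hqw (incomp_symm hqn) hnw with ⟨h12, -, -⟩ | ⟨h13, -, -⟩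
  · exact absurd h12.le hf.1
  · exact h13

lemma lt_forces_incomp {f : P × P → P} (hpres : PresLow f) {p q z w : P}
    (hlt13 : f (p, q) < f (z, w)) {m n : P}
    (hpm : p < m) (hzp : Incomp z p) (hzm : Incomp z m)
    (hqw : q < w) (hnq : Incomp n q) (hnw : Incomp n w) :
    Incomp (f (p, q)) (f (m, n)) := by
  rcases probe hpres hpm hzp hzm hqw hnq hnw with ⟨-, h31, -⟩ | ⟨-, h21, -⟩
  · exact absurd hlt13.le h31.2
  · exact incomp_symm h21

lemma sbad_incomp_all {f : P × P → P} (hP : ExtensionProperty P) (hpres : PresLow f)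
    {p q : P} (h : SBad f p q) {M N : P} (hpM : p < M) (hqN : Incomp q N) :
    Incomp (f (p, q)) (f (M, N)) := by
  obtain ⟨m, n, hpm, hqn, hf⟩ := h
  obtain ⟨z, h1, h2, h3⟩ := exists_incomp3 hP p m M
  obtain ⟨w, hqw, hnw, hNw⟩ := exists_gt_incomp2 hP q n N hqn.2 hqN.2
  have hltzw : f (p, q) < f (z, w) :=
    sbad_lt_aux hpres hpm hqn hf (incomp_symm h1) (incomp_symm h2) hqw hnw
  exact lt_forces_incomp hpres hltzw hpM (incomp_symm h1) (incomp_symm h3) hqw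
    (incomp_symm hqN) hNw

lemma sbad_lt_all {f : P × P → P} (hP : ExtensionProperty P) (hpres : PresLow f)
    {p q : P} (h : SBad f p q) {z w : P} (hpz : Incomp p z) (hqw : q < w) :
    f (p, q) < f (z, w) := by
  obtain ⟨M, hpM, hzM, -⟩ := exists_gt_incomp2 hP p z z hpz.2 hpz.2
  obtain ⟨N, hqN, hwN, -⟩ := exists_incomp3 hP q w w
  have hf : Incomp (f (p, q)) (f (M, N)) := sbad_incomp_all hP hpres h hpM hqN
  exact sbad_lt_aux hpres hpM hqN hf (incomp_symm hpz) hzM hqw (incomp_symm hwN)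

lemma notS_lt {f : P × P → P} (hP : ExtensionProperty P) (hpres : PresLow f)
    {p q : P} (h : ¬ SBad f p q) {M N : P} (hpM : p < M) (hqN : Incomp q N) :
    f (p, q) < f (M, N) := by
  rcases dichot hP hpres hpM hqN with h' | h'
  · exact h'
  · exact absurd ⟨M, N, hpM, hqN, h'⟩ h

lemma notS_incomp {f : P × P → P} (hP : ExtensionProperty P) (hpres : PresLow f)
    {p q : P} (h : ¬ SBad f p q) {z w : P} (hpz : Incomp p z) (hqw : q < w) :
    Incomp (f (p, q)) (f (z, w)) := by
  obtain ⟨m, hpm, hzm, -⟩ := exists_gt_incomp2 hP p z z hpz.2 hpz.2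
  obtain ⟨n, hqn, hwn, -⟩ := exists_incomp3 hP q w w
  have h12 : f (p, q) < f (m, n) := notS_lt hP hpres h hpm hqn
  rcases probe hpres hpm (incomp_symm hpz) hzm hqw (incomp_symm hqn) (incomp_symm hwn) with
    ⟨-, h31, -⟩ | ⟨-, h21, -⟩
  · exact incomp_symm h31
  · exact absurd h12.le h21.2

lemma sbad_prop {f : P × P → P} (hP : ExtensionProperty P) (hpres : PresLow f)
    {p q : P} (h : SBad f p q) {z w : P} (hpz : Incomp p z) (hqw : q < w) :
    SBad f z w := by
  by_contra hn
  obtain ⟨M, hzM, hpM⟩ := exists_gt_gt hP z p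
  obtain ⟨N, hwN, hqN, -⟩ := exists_incomp3 hP w q q
  have h1 : f (p, q) < f (z, w) := sbad_lt_all hP hpres h hpz hqw
  have h2 : f (z, w) < f (M, N) := notS_lt hP hpres hn hzM hwN
  have h3 : Incomp (f (p, q)) (f (M, N)) := sbad_incomp_all hP hpres h hpM hqN
  exact h3.1 (h1.trans h2).le

lemma notS_prop {f : P × P → P} (hP : ExtensionProperty P) (hpres : PresLow f)
    {p q : P} (h : ¬ SBad f p q) {M N : P} (hpM : p < M) (hqN : Incomp q N) :
    ¬ SBad f M N := by
  intro hS
  obtain ⟨z, hMz, hpz, -⟩ := exists_incomp3 hP M p p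
  obtain ⟨w, hNw, hqw⟩ := exists_gt_gt hP N q
  have h1 : f (p, q) < f (M, N) := notS_lt hP hpres h hpM hqN
  have h2 : f (M, N) < f (z, w) := sbad_lt_all hP hpres hS hMz hNw
  have h3 : Incomp (f (p, q)) (f (z, w)) := notS_incomp hP hpres h hpz hqw
  exact h3.1 (h1.trans h2).le

lemma sbad_all {f : P × P → P} (hP : ExtensionProperty P) (hpres : PresLow f)
    {p q : P} (h : SBad f p q) (p' q' : P) : SBad f p' q' := by
  by_contra hn
  obtain ⟨m1, hp'm1, -⟩ := exists_gt_gt hP p' p'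
  obtain ⟨z1, hpz1, hm1z1, -⟩ := exists_incomp3 hP p m1 m1
  obtain ⟨w1, hqw1, -⟩ := exists_gt_gt hP q q
  obtain ⟨n1, hq'n1, hw1n1, -⟩ := exists_incomp3 hP q' w1 w1
  obtain ⟨c, hm1c, hz1c, -⟩ := exists_gt_incomp2 hP m1 z1 z1 hm1z1.2 hm1z1.2
  obtain ⟨d, hw1d, hn1d, -⟩ := exists_gt_incomp2 hP w1 n1 n1 hw1n1.2 hw1n1.2
  have hS1 : SBad f z1 w1 := sbad_prop hP hpres h hpz1 hqw1
  have hS2 : SBad f c d := sbad_prop hP hpres hS1 hz1c hw1d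
  have hN1 : ¬ SBad f m1 n1 := notS_prop hP hpres hn hp'm1 hq'n1
  have hN2 : ¬ SBad f c d := notS_prop hP hpres hN1 hm1c hn1d
  exact hN2 hS2

end AuxLemmas

/-- For a binary map preserving `<` and `⊥` (coordinatewise),
preserving the relation `Low` is equivalent to being dominated. -/
theorem preserves_low_iff_dominated
    (P : Type*) [PartialOrder P] (hP : ExtensionProperty P)
    (f : P × P → P)
    (hlt : ∀ x x' y y' : P, x < x' → y < y' → f (x, y) < f (x', y'))
    (hbot : ∀ x x' y y' : P, Incomp x x' → Incomp y y' →
      Incomp (f (x, y)) (f (x', y'))) :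
    (∀ x y z x' y' z' : P, Low x y z → Low x' y' z' →
        Low (f (x, x')) (f (y, y')) (f (z, z'))) ↔ Dominated f := by
  constructor
  · intro hpres
    by_cases hex : ∃ p q, SBad f p q
    · -- every base is `SBad`: f is dominated in the second argument
      obtain ⟨p0, q0, h0⟩ := hex
      have hall : ∀ p q, SBad f p q := fun p q => sbad_all hP hpres h0 p q
      refine Or.inr ⟨?_, ?_⟩
      · intro x x' y y' hyy'
        obtain ⟨y'', hy1, hy2⟩ := exists_btw hP hyy'
        obtain ⟨w, hxw, hx'w, -⟩ := exists_incomp3 hP x x' x'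
        have s1 : f (x, y) < f (w, y'') := sbad_lt_all hP hpres (hall x y) hxw hy1
        have s2 : f (w, y'') < f (x', y') :=
          sbad_lt_all hP hpres (hall w y'') (incomp_symm hx'w) hy2
        exact s1.trans s2
      · intro x x' y y' hyy'
        by_cases h1 : x ≤ x'
        · by_cases h2 : x' ≤ x
          · -- x = x'
            obtain rfl : x = x' := le_antisymm h1 h2
            obtain ⟨x'', hx''⟩ := exists_gt_gt hP x x
            constructor
            · intro hle
              obtain ⟨w, hy'w, hyw, -⟩ := exists_gt_incomp2 hP y' y y hyy'.1 hyy'.1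
              have hc : f (x, y') < f (x'', w) := hlt x x'' y' w hx''.1 hy'w
              have hc2 : f (x, y) < f (x'', w) := lt_of_le_of_lt hle hc
              exact (sbad_incomp_all hP hpres (hall x y) hx''.1 hyw).1 hc2.le
            · intro hle
              obtain ⟨w', hyw', hy'w', -⟩ := exists_gt_incomp2 hP y y' y' hyy'.2 hyy'.2
              have hc : f (x, y) < f (x'', w') := hlt x x'' y w' hx''.1 hyw'
              have hc2 : f (x, y') < f (x'', w') := lt_of_le_of_lt hle hc
              exact (sbad_incomp_all hP hpres (hall x y') hx''.1 hy'w').1 hc2.le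
          · exact sbad_incomp_all hP hpres (hall x y) (lt_of_le_not_ge h1 h2) hyy'
        · by_cases h2 : x' ≤ x
          · exact incomp_symm
              (sbad_incomp_all hP hpres (hall x' y') (lt_of_le_not_ge h2 h1)
                (incomp_symm hyy'))
          · exact hbot x x' y y' ⟨h1, h2⟩ hyy'
    · -- no base is `SBad`: f is dominated in the first argument
      push_neg at hex
      have hn : ∀ p q, ¬ SBad f p q := hex
      refine Or.inl ⟨?_, ?_⟩
      · intro x x' y y' hxx'
        obtain ⟨x'', hx1, hx2⟩ := exists_btw hP hxx'
        obtain ⟨w, hyw, hy'w, -⟩ := exists_incomp3 hP y y' y'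
        have s1 : f (x, y) < f (x'', w) := notS_lt hP hpres (hn x y) hx1 hyw
        have s2 : f (x'', w) < f (x', y') :=
          notS_lt hP hpres (hn x'' w) hx2 (incomp_symm hy'w)
        exact s1.trans s2
      · intro x x' y y' hxx'
        by_cases h1 : y ≤ y'
        · by_cases h2 : y' ≤ y
          · -- y = y'
            obtain rfl : y = y' := le_antisymm h1 h2
            obtain ⟨y'', hy''⟩ := exists_gt_gt hP y y
            constructor
            · intro hle
              obtain ⟨z', hx'z', hxz', -⟩ := exists_gt_incomp2 hP x' x x hxx'.1 hxx'.1
              have hc : f (x', y) < f (z', y'') := hlt x' z' y y'' hx'z' hy''.1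
              have hc2 : f (x, y) < f (z', y'') := lt_of_le_of_lt hle hc
              exact (notS_incomp hP hpres (hn x y) hxz' hy''.1).1 hc2.le
            · intro hle
              obtain ⟨z, hxz, hx'z, -⟩ := exists_gt_incomp2 hP x x' x' hxx'.2 hxx'.2
              have hc : f (x, y) < f (z, y'') := hlt x z y y'' hxz hy''.1
              have hc2 : f (x', y) < f (z, y'') := lt_of_le_of_lt hle hc
              exact (notS_incomp hP hpres (hn x' y) hx'z hy''.1).1 hc2.le
          · exact notS_incomp hP hpres (hn x y) hxx' (lt_of_le_not_ge h1 h2)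
        · by_cases h2 : y' ≤ y
          · exact incomp_symm
              (notS_incomp hP hpres (hn x' y') (incomp_symm hxx') (lt_of_le_not_ge h2 h1))
          · exact hbot x x' y y' hxx' ⟨h1, h2⟩
  · rintro (⟨hl, hi⟩ | ⟨hl, hi⟩) x y z x' y' z' h h'
    · rcases h with ⟨h1, h2, h3⟩ | ⟨h1, h2, h3⟩
      · exact Or.inl ⟨hl x y x' y' h1, hi z x z' x' h2, hi z y z' y' h3⟩
      · exact Or.inr ⟨hl x z x' z' h1, hi y x y' x' h2, hi y z y' z' h3⟩
    · rcases h' with ⟨h1, h2, h3⟩ | ⟨h1, h2, h3⟩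
      · exact Or.inl ⟨hl x y x' y' h1, hi z x z' x' h2, hi z y z' y' h3⟩
      · exact Or.inr ⟨hl x z x' z' h1, hi y x y' x' h2, hi y z y' z' h3⟩
end
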